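/- For any dissimilarity space (X,d) with |X| = n, the number of distinct copoints of (X,d) (subsets of X that are a p-copoint for some p ∈ X) is at most 2n − 1. -/

import Mathlib

structure Dissim (X : Type*) where
  d : X → X → ℝ
  symm : ∀ x y, d x y = d y x
  nonneg : ∀ x y, 0 ≤ d x y
  self : ∀ x, d x x = 0

variable {X : Type*}

def Compatible (D : Dissim X) (lt : X → X → Prop) : Prop :=
  ∀ x y z : X, lt x y → lt y z → D.d x y ≤ D.d x z ∧ D.d y z ≤ D.d x z

def IsCompatOrder (D : Dissim X) (lt : X → X → Prop) : Prop :=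
  IsStrictTotalOrder X lt ∧ Compatible D lt

def Robinson (D : Dissim X) : Prop :=
  ∃ lt : X → X → Prop, IsCompatOrder D lt

def IsMmodule (D : Dissim X) (M : Set X) : Prop :=
  ∀ z ∉ M, ∀ x ∈ M, ∀ y ∈ M, D.d z x = D.d z y

def IsInterval (lt : X → X → Prop) (I : Set X) : Prop :=
  ∀ a b c : X, lt a b → lt b c → a ∈ I → c ∈ I → b ∈ I

def IsBlock (D : Dissim X) (Y : Set X) : Prop :=
  ∀ lt : X → X → Prop, IsCompatOrder D lt → IsInterval lt Y

noncomputable def diam (D : Dissim X) (Y : Set X) : ℝ :=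
  sSup (Set.image2 D.d Y Y)

def Gdelta (D : Dissim X) (δ : ℝ) : SimpleGraph X where
  Adj x y := x ≠ y ∧ D.d x y ≠ δ
  symm := ⟨by
    rintro x y ⟨hxy, hd⟩
    exact ⟨hxy.symm, by rw [D.symm]; exact hd⟩⟩
  loopless := ⟨by rintro x ⟨h, -⟩; exact h rfl⟩

def Gle (D : Dissim X) (δ : ℝ) : SimpleGraph X where
  Adj x y := x ≠ y ∧ D.d x y ≤ δ
  symm := ⟨by
    rintro x y ⟨hxy, hd⟩
    exact ⟨hxy.symm, by rw [D.symm]; exact hd⟩⟩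
  loopless := ⟨by rintro x ⟨h, -⟩; exact h rfl⟩

def Glt (D : Dissim X) (δ : ℝ) : SimpleGraph X where
  Adj x y := x ≠ y ∧ D.d x y < δ
  symm := ⟨by
    rintro x y ⟨hxy, hd⟩
    exact ⟨hxy.symm, by rw [D.symm]; exact hd⟩⟩
  loopless := ⟨by rintro x ⟨h, -⟩; exact h rfl⟩

def IsCompOf {V : Type*} (G : SimpleGraph V) (C : Set V) : Prop :=
  ∃ x : V, C = {y | G.Reachable x y}

def MMax (D : Dissim X) : Set (Set X) :=
  {M | IsMmodule D M ∧ M ≠ Set.univ ∧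
    ∀ M' : Set X, IsMmodule D M' → M' ≠ Set.univ → M ⊆ M' → M = M'}

def IsPartition {α : Type*} (P : Set (Set α)) : Prop :=
  (∀ A ∈ P, A.Nonempty) ∧
  (∀ A ∈ P, ∀ B ∈ P, A ≠ B → Disjoint A B) ∧
  ⋃₀ P = Set.univ

def IsCopartition {α : Type*} (P : Set (Set α)) : Prop :=
  IsPartition ((fun M => Mᶜ) '' P)

def SimpleGraph.restrictTo {V : Type*} (G : SimpleGraph V) (S : Set V) : SimpleGraph V where
  Adj x y := x ∈ S ∧ y ∈ S ∧ G.Adj x y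
  symm := ⟨by rintro x y ⟨hx, hy, h⟩; exact ⟨hy, hx, h.symm⟩⟩
  loopless := ⟨by rintro x ⟨-, -, h⟩; exact h.ne rfl⟩

def ConnectedWithin {V : Type*} (G : SimpleGraph V) (S : Set V) : Prop :=
  S.Nonempty ∧ ∀ x ∈ S, ∀ y ∈ S, (G.restrictTo S).Reachable x y

def IsCompWithin {V : Type*} (G : SimpleGraph V) (S : Set V) (C : Set V) : Prop :=
  ∃ x ∈ S, C = {y | (G.restrictTo S).Reachable x y}

def IsStrictTotalOrderOn {α : Type*} (S : Set α) (lt : α → α → Prop) : Prop :=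
  (∀ x ∈ S, ¬ lt x x) ∧
  (∀ x ∈ S, ∀ y ∈ S, ∀ z ∈ S, lt x y → lt y z → lt x z) ∧
  (∀ x ∈ S, ∀ y ∈ S, x ≠ y → (lt x y ∨ lt y x) ∧ ¬ (lt x y ∧ lt y x))

def CompatibleOn (D : Dissim X) (S : Set X) (lt : X → X → Prop) : Prop :=
  ∀ x ∈ S, ∀ y ∈ S, ∀ z ∈ S, lt x y → lt y z → D.d x y ≤ D.d x z ∧ D.d y z ≤ D.d x z

def IsCompatOrderOn (D : Dissim X) (S : Set X) (lt : X → X → Prop) : Prop :=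
  IsStrictTotalOrderOn S lt ∧ CompatibleOn D S lt

def FlatOn (D : Dissim X) (S : Set X) : Prop :=
  ∃ lt : X → X → Prop, IsCompatOrderOn D S lt ∧ (∃ x ∈ S, ∃ y ∈ S, lt x y) ∧
    ∀ lt' : X → X → Prop, IsCompatOrderOn D S lt' →
      (∀ x ∈ S, ∀ y ∈ S, (lt' x y ↔ lt x y)) ∨ (∀ x ∈ S, ∀ y ∈ S, (lt' x y ↔ lt y x))

def Flat (D : Dissim X) : Prop :=
  ∃ lt : X → X → Prop, IsCompatOrder D lt ∧ (∃ x y : X, lt x y) ∧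
    ∀ lt' : X → X → Prop, IsCompatOrder D lt' →
      (∀ x y : X, lt' x y ↔ lt x y) ∨ (∀ x y : X, lt' x y ↔ lt y x)

def IsCopointAt (D : Dissim X) (p : X) (C : Set X) : Prop :=
  IsMmodule D C ∧ C.Nonempty ∧ p ∉ C ∧
  ∀ C' : Set X, IsMmodule D C' → p ∉ C' → C ⊆ C' → C = C'

def bigGraph (D : Dissim X) (δ : ℝ) (I : Set (Set X)) : SimpleGraph (Set X) where
  Adj C C' := C ∈ I ∧ C' ∈ I ∧ C ≠ C' ∧ ∃ x ∈ C, ∃ y ∈ C', δ < D.d x y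
  symm := ⟨by
    rintro C C' ⟨hC, hC', hne, x, hx, y, hy, hd⟩
    exact ⟨hC', hC, hne.symm, y, hy, x, hx, by rw [D.symm]; exact hd⟩⟩
  loopless := ⟨by rintro C ⟨-, -, hne, -⟩; exact hne rfl⟩

/-!
Call an mmodule strong if it overlaps no mmodule. Strong mmodules form a laminar family, and a
laminar family of nonempty subsets of an `n`-set has at most `2n - 1` members. So it suffices to
inject the copoints into the nonempty strong mmodules. A strong copoint is sent to itself. A
`p`-copoint `C` that overlaps some mmodule is sent to `H \ C`, where `H` is the least mmodule
strictly containing `C` (every such mmodule contains `p`, by maximality of `C`): this set is a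
strong mmodule, it is not a copoint, and it determines `C`.
-/

open scoped symmDiff

section Laminar

variable {α : Type*}

def Overlap (A B : Set α) : Prop := (A ∩ B).Nonempty ∧ ¬A ⊆ B ∧ ¬B ⊆ A

def IsLaminar (F : Set (Set α)) : Prop := F.Pairwise fun A B => ¬Overlap A B

lemma IsLaminar.mono {F G : Set (Set α)} (hG : IsLaminar G) (h : F ⊆ G) : IsLaminar F :=
  Set.Pairwise.mono h hG

lemma subset_or_disjoint_of_not_overlap {A B : Set α} (h : ¬Overlap A B) (hBA : ¬B ⊆ A) :
    A ⊆ B ∨ Disjoint A B := by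
  rw [Overlap, ← Set.not_disjoint_iff_nonempty_inter] at h
  tauto

lemma notMem_symmDiff_of_mem_of_mem {A B : Set α} {x : α} (hA : x ∈ A) (hB : x ∈ B) :
    x ∉ A ∆ B := by
  rintro (⟨-, h⟩ | ⟨-, h⟩) <;> contradiction

theorem IsLaminar.ncard_le [Finite α] {F : Set (Set α)} {S : Set α} (hF : IsLaminar F)
    (hne : ∀ A ∈ F, A.Nonempty) (hS : ∀ A ∈ F, A ⊆ S) : F.ncard ≤ 2 * S.ncard - 1 := by
  induction hn : S.ncard using Nat.strong_induction_on generalizing F S with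
  | _ n ih =>
    subst hn
    by_cases hFS : F ⊆ {S}
    · rcases F.eq_empty_or_nonempty with rfl | ⟨A, hA⟩
      · simp
      have hS₁ : 0 < S.ncard := ((hne A hA).mono (hS A hA)).ncard_pos
      have := Set.ncard_le_ncard hFS
      rw [Set.ncard_singleton] at this
      omega
    -- Split off a maximal member `M ≠ S`: the others lie inside `M` or inside `S \ M`.
    obtain ⟨M, ⟨hMF, hMne⟩, hMmax⟩ := (Set.toFinite (F \ {S})).exists_maximal
      (Set.sdiff_nonempty.2 hFS)
    have hMS : M ⊂ S := ⟨hS M hMF, fun h => hMne ((hS M hMF).antisymm h)⟩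
    obtain ⟨m, hm⟩ := hne M hMF
    have hcover : F ⊆ insert S ({A ∈ F | A ⊆ M} ∪ {A ∈ F | A ⊆ S \ M}) := by
      intro A hA
      by_cases hAS : A = S
      · exact Or.inl hAS
      refine Or.inr ?_
      by_cases hMA : M ⊆ A
      · exact Or.inl ⟨hA, hMmax ⟨hA, hAS⟩ hMA⟩
      by_cases hAM : A = M
      · exact Or.inl ⟨hA, hAM.le⟩
      rcases subset_or_disjoint_of_not_overlap (hF hA hMF hAM) hMA with h | h
      · exact Or.inl ⟨hA, h⟩
      · exact Or.inr ⟨hA, Set.subset_sdiff.2 ⟨hS A hA, h⟩⟩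
    have hM := ih M.ncard (Set.ncard_lt_ncard hMS) (F := {A ∈ F | A ⊆ M})
      (hF.mono (Set.sep_subset F _)) (fun A hA => hne A hA.1) (fun A hA => hA.2) rfl
    have hSM := ih (S \ M).ncard
      (Set.ncard_lt_ncard (hMS.subset.sdiff_ssubset_of_nonempty ⟨m, hm⟩))
      (F := {A ∈ F | A ⊆ S \ M}) (hF.mono (Set.sep_subset F _)) (fun A hA => hne A hA.1)
      (fun A hA => hA.2) rfl
    have hcard := Set.ncard_sdiff_add_ncard_of_subset hMS.subset
    have hM₁ : 0 < M.ncard := (show M.Nonempty from ⟨m, hm⟩).ncard_pos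
    have hSM₁ : 0 < (S \ M).ncard := (Set.sdiff_nonempty.2 hMS.2).ncard_pos
    have := (Set.ncard_le_ncard hcover).trans
      ((Set.ncard_insert_le _ _).trans (Nat.add_le_add_right (Set.ncard_union_le _ _) 1))
    omega

end Laminar

section Mmodule

variable {D : Dissim X} {C M N N₀ : Set X}

lemma isMmodule_sInter {𝓜 : Set (Set X)} (h : ∀ M ∈ 𝓜, IsMmodule D M) :
    IsMmodule D (⋂₀ 𝓜) := by
  intro z hz x hx y hy
  obtain ⟨M, hM, hzM⟩ : ∃ M ∈ 𝓜, z ∉ M := by simpa using hz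
  exact h M hM z hzM x (hx M hM) y (hy M hM)

lemma IsMmodule.inter (hM : IsMmodule D M) (hN : IsMmodule D N) : IsMmodule D (M ∩ N) := by
  intro z hz x hx y hy
  by_cases hzM : z ∈ M
  · exact hN z (fun hzN => hz ⟨hzM, hzN⟩) x hx.2 y hy.2
  · exact hM z hzM x hx.1 y hy.1

lemma IsMmodule.dissim_eq_of_notMem_union (hM : IsMmodule D M) (hN : IsMmodule D N) {a z y : X}
    (ha : a ∈ M ∩ N) (hz : z ∉ M ∪ N) (hy : y ∈ M ∪ N) : D.d z y = D.d z a := by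
  rcases hy with hy | hy
  · exact hM z (fun h => hz (Or.inl h)) y hy a ha.1
  · exact hN z (fun h => hz (Or.inr h)) y hy a ha.2

lemma IsMmodule.union (hM : IsMmodule D M) (hN : IsMmodule D N) (h : (M ∩ N).Nonempty) :
    IsMmodule D (M ∪ N) := by
  obtain ⟨a, ha⟩ := h
  intro z hz x hx y hy
  rw [hM.dissim_eq_of_notMem_union hN ha hz hx, hM.dissim_eq_of_notMem_union hN ha hz hy]

lemma IsMmodule.symmDiff (hM : IsMmodule D M) (hN : IsMmodule D N) (h : Overlap M N) :
    IsMmodule D (M ∆ N) := by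
  obtain ⟨⟨a, ha⟩, hMN, hNM⟩ := h
  obtain ⟨b, hbM, hbN⟩ := Set.not_subset.1 hMN
  obtain ⟨c, hcN, hcM⟩ := Set.not_subset.1 hNM
  intro z hz x hx y hy
  by_cases hzM : z ∈ M
  · have hzN : z ∈ N := by_contra fun hzN => hz (Or.inl ⟨hzM, hzN⟩)
    have key : ∀ y ∈ M ∆ N, D.d z y = D.d z b := by
      rintro y (⟨hyM, hyN⟩ | ⟨hyN, hyM⟩)
      · calc D.d z y = D.d y c := by rw [D.symm]; exact hN y hyN z hzN c hcN
          _ = D.d c b := by rw [D.symm]; exact hM c hcM y hyM b hbM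
          _ = D.d z b := by rw [D.symm, D.symm z]; exact hN b hbN c hcN z hzN
      · calc D.d z y = D.d y b := by rw [D.symm]; exact hM y hyM z hzM b hbM
          _ = D.d z b := by rw [D.symm, D.symm z]; exact hN b hbN y hyN z hzN
    rw [key x hx, key y hy]
  · have hzN : z ∉ M ∪ N := by
      rintro (hzM' | hzN)
      exacts [hzM hzM', hz (Or.inr ⟨hzN, hzM⟩)]
    rw [hM.dissim_eq_of_notMem_union hN ha hzN (Set.symmDiff_subset_union hx),
      hM.dissim_eq_of_notMem_union hN ha hzN (Set.symmDiff_subset_union hy)]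

lemma IsMmodule.sdiff_of_overlap (hM : IsMmodule D M) (hN : IsMmodule D N) (h : Overlap M N) :
    IsMmodule D (N \ M) := by
  have hNM : N \ M = N ∩ M ∆ N := by
    ext x
    simp only [Set.mem_sdiff, Set.mem_inter_iff, Set.mem_symmDiff]
    tauto
  rw [hNM]
  exact hN.inter (hM.symmDiff hN h)

def IsStrongMmodule (D : Dissim X) (A : Set X) : Prop :=
  IsMmodule D A ∧ ∀ N, IsMmodule D N → ¬Overlap A N

lemma isLaminar_setOf_isStrongMmodule : IsLaminar {A | IsStrongMmodule D A} :=
  fun _ hA _ hB _ => hA.2 _ hB.1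

lemma IsMmodule.exists_overlap_of_not_isStrongMmodule (hC : IsMmodule D C)
    (h : ¬IsStrongMmodule D C) : ∃ N, IsMmodule D N ∧ Overlap C N := by
  simpa [IsStrongMmodule, hC] using h

def strictHull (D : Dissim X) (C : Set X) : Set X := ⋂₀ {N | IsMmodule D N ∧ C ⊂ N}

def hullDiff (D : Dissim X) (C : Set X) : Set X := strictHull D C \ C

lemma isMmodule_strictHull : IsMmodule D (strictHull D C) :=
  isMmodule_sInter fun _ hN => hN.1

lemma subset_strictHull : C ⊆ strictHull D C :=
  Set.subset_sInter fun _ hN => hN.2.subset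

lemma strictHull_subset (hN : IsMmodule D N) (hCN : C ⊂ N) : strictHull D C ⊆ N :=
  Set.sInter_subset_of_mem ⟨hN, hCN⟩

lemma IsMmodule.hullDiff_subset (hC : IsMmodule D C) (hN : IsMmodule D N)
    (hCN : (C ∩ N).Nonempty) (hNC : ¬N ⊆ C) : hullDiff D C ⊆ N := by
  have hH : strictHull D C ⊆ C ∪ N := strictHull_subset (hC.union hN hCN)
    ⟨Set.subset_union_left, fun h => hNC (Set.subset_union_right.trans h)⟩
  exact fun x hx => (hH hx.1).resolve_left hx.2

lemma IsMmodule.isMmodule_hullDiff (hC : IsMmodule D C) (hN : IsMmodule D N) (h : Overlap C N) :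
    IsMmodule D (hullDiff D C) := by
  have hsub := hC.hullDiff_subset hN h.1 h.2.2
  have hH : hullDiff D C = strictHull D C ∩ (N \ C) :=
    Set.ext fun x => ⟨fun hx => ⟨hx.1, hsub hx, hx.2⟩, fun hx => ⟨hx.1, hx.2.2⟩⟩
  rw [hH]
  exact isMmodule_strictHull.inter (hC.sdiff_of_overlap hN h)

lemma IsMmodule.isStrongMmodule_hullDiff (hC : IsMmodule D C) (hN₀ : IsMmodule D N₀)
    (h : Overlap C N₀) : IsStrongMmodule D (hullDiff D C) := by
  refine ⟨hC.isMmodule_hullDiff hN₀ h, fun N hN ⟨⟨e, heΔ, heN⟩, hΔN, hNΔ⟩ => ?_⟩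
  by_cases hCN : (C ∩ N).Nonempty
  · exact hΔN (hC.hullDiff_subset hN hCN fun hNC => heΔ.2 (hNC heN))
  -- Otherwise `N` overlaps the hull, and their symmetric difference is an mmodule strictly
  -- containing `C` but missing `e`.
  have hNH : ¬N ⊆ strictHull D C :=
    fun hNH => hNΔ fun x hx => ⟨hNH hx, fun hxC => hCN ⟨x, hxC, hx⟩⟩
  obtain ⟨a, haC, -⟩ := h.1
  obtain ⟨f, hfN, hfH⟩ := Set.not_subset.1 hNH
  have hHN : Overlap (strictHull D C) N :=
    ⟨⟨e, heΔ.1, heN⟩, fun hHN => hCN ⟨a, haC, hHN (subset_strictHull haC)⟩, hNH⟩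
  have hCS : C ⊂ strictHull D C ∆ N :=
    ⟨fun x hx => Or.inl ⟨subset_strictHull hx, fun hxN => hCN ⟨x, hx, hxN⟩⟩,
      fun hSC => hfH (subset_strictHull (hSC (Or.inr ⟨hfN, hfH⟩)))⟩
  exact notMem_symmDiff_of_mem_of_mem heΔ.1 heN
    (strictHull_subset (isMmodule_strictHull.symmDiff hN hHN) hCS heΔ.1)

end Mmodule

namespace IsCopointAt

variable {D : Dissim X} {C N : Set X} {p : X}

lemma mem_of_ssubset (hC : IsCopointAt D p C) (hN : IsMmodule D N) (h : C ⊂ N) : p ∈ N :=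
  by_contra fun hp => h.ne (hC.2.2.2 N hN hp h.subset)

lemma mem_hullDiff (hC : IsCopointAt D p C) : p ∈ hullDiff D C :=
  ⟨Set.mem_sInter.2 fun _ hN => hC.mem_of_ssubset hN.1 hN.2, hC.2.2.1⟩

lemma eq_of_hullDiff_eq_of_strictHull_subset {C₁ C₂ : Set X} {p₁ : X}
    (h₁ : IsCopointAt D p₁ C₁) (h₂ : IsMmodule D C₂) (h : hullDiff D C₁ = hullDiff D C₂)
    (hH : strictHull D C₁ ⊆ strictHull D C₂) : C₁ = C₂ := by
  have hsub : C₁ ⊆ C₂ := fun x hx => by_contra fun hx₂ =>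
    (h.symm.subset ⟨hH (subset_strictHull hx), hx₂⟩).2 hx
  refine hsub.antisymm (by_contra fun hns => ?_)
  exact (h.subset h₁.mem_hullDiff).2 (h₁.mem_of_ssubset h₂ ⟨hsub, hns⟩)

lemma eq_of_hullDiff_eq {C₁ C₂ : Set X} {p₁ p₂ : X} (h₁ : IsCopointAt D p₁ C₁)
    (h₂ : IsCopointAt D p₂ C₂) (h : hullDiff D C₁ = hullDiff D C₂) : C₁ = C₂ := by
  by_cases h12 : strictHull D C₁ ⊆ strictHull D C₂
  · exact h₁.eq_of_hullDiff_eq_of_strictHull_subset h₂.1 h h12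
  by_cases h21 : strictHull D C₂ ⊆ strictHull D C₁
  · exact (h₂.eq_of_hullDiff_eq_of_strictHull_subset h₁.1 h.symm h21).symm
  exfalso
  -- The two hulls overlap at `p₁`; their symmetric difference contains `hullDiff D C₁`, hence `p₁`.
  have hp₁ := h₁.mem_hullDiff
  have hp₁' := h.subset hp₁
  have hS : IsMmodule D (strictHull D C₁ ∆ strictHull D C₂) :=
    isMmodule_strictHull.symmDiff isMmodule_strictHull ⟨⟨p₁, hp₁.1, hp₁'.1⟩, h12, h21⟩
  obtain ⟨b, hb₁, hb₂⟩ := Set.not_subset.1 h12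
  obtain ⟨c, hc₂, hc₁⟩ := Set.not_subset.1 h21
  have hbC : b ∈ C₁ := by_contra fun hb => hb₂ (h.subset ⟨hb₁, hb⟩).1
  have hsub := h₁.1.hullDiff_subset hS ⟨b, hbC, Or.inl ⟨hb₁, hb₂⟩⟩
    fun hSC => hc₁ (subset_strictHull (hSC (Or.inr ⟨hc₂, hc₁⟩)))
  exact notMem_symmDiff_of_mem_of_mem hp₁.1 hp₁'.1 (hsub hp₁)

end IsCopointAt

section Representative

variable {D : Dissim X} {C N : Set X} {p : X}

lemma IsMmodule.not_isCopointAt_hullDiff (hC : IsMmodule D C) (hN : IsMmodule D N)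
    (h : Overlap C N) (q : X) : ¬IsCopointAt D q (hullDiff D C) := by
  -- The hull, `N` and `C ∆ N` all strictly contain `hullDiff D C`, so they contain `q`;
  -- but then `q ∈ C ∩ N`, which misses `C ∆ N`.
  intro hq
  obtain ⟨a, haC, haN⟩ := h.1
  obtain ⟨b, hbC, hbN⟩ := Set.not_subset.1 h.2.1
  have hsub := hC.hullDiff_subset hN ⟨a, haC, haN⟩ h.2.2
  have hqH : q ∈ strictHull D C := hq.mem_of_ssubset isMmodule_strictHull
    ⟨Set.sdiff_subset, fun hH => (hH (subset_strictHull haC)).2 haC⟩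
  have hqC : q ∈ C := by_contra fun hqC => hq.2.2.1 ⟨hqH, hqC⟩
  have hqN : q ∈ N := hq.mem_of_ssubset hN ⟨hsub, fun hN => (hN haN).2 haC⟩
  refine notMem_symmDiff_of_mem_of_mem hqC hqN (hq.mem_of_ssubset (hC.symmDiff hN h) ?_)
  exact ⟨fun x hx => Or.inr ⟨hsub hx, hx.2⟩, fun hS => (hS (Or.inl ⟨hbC, hbN⟩)).2 hbC⟩

open Classical in
noncomputable def strongRep (D : Dissim X) (C : Set X) : Set X :=
  if IsStrongMmodule D C then C else hullDiff D C

lemma strongRep_of_isStrongMmodule (h : IsStrongMmodule D C) : strongRep D C = C := if_pos h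

lemma strongRep_of_not_isStrongMmodule (h : ¬IsStrongMmodule D C) :
    strongRep D C = hullDiff D C := if_neg h

lemma IsCopointAt.strongRep_mem (hC : IsCopointAt D p C) :
    strongRep D C ∈ {A | IsStrongMmodule D A ∧ A.Nonempty} := by
  by_cases h : IsStrongMmodule D C
  · rw [strongRep_of_isStrongMmodule h]
    exact ⟨h, hC.2.1⟩
  · obtain ⟨N, hN, hCN⟩ := hC.1.exists_overlap_of_not_isStrongMmodule h
    rw [strongRep_of_not_isStrongMmodule h]
    exact ⟨hC.1.isStrongMmodule_hullDiff hN hCN, p, hC.mem_hullDiff⟩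

lemma injOn_strongRep : Set.InjOn (strongRep D) {C | ∃ p, IsCopointAt D p C} := by
  rintro C₁ ⟨p₁, h₁⟩ C₂ ⟨p₂, h₂⟩ h
  by_cases hs₁ : IsStrongMmodule D C₁ <;> by_cases hs₂ : IsStrongMmodule D C₂
  · rwa [strongRep_of_isStrongMmodule hs₁, strongRep_of_isStrongMmodule hs₂] at h
  · rw [strongRep_of_isStrongMmodule hs₁, strongRep_of_not_isStrongMmodule hs₂] at h
    obtain ⟨N, hN, hCN⟩ := h₂.1.exists_overlap_of_not_isStrongMmodule hs₂
    exact absurd (h ▸ h₁) (h₂.1.not_isCopointAt_hullDiff hN hCN p₁)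
  · rw [strongRep_of_not_isStrongMmodule hs₁, strongRep_of_isStrongMmodule hs₂] at h
    obtain ⟨N, hN, hCN⟩ := h₁.1.exists_overlap_of_not_isStrongMmodule hs₁
    exact absurd (h ▸ h₂) (h₁.1.not_isCopointAt_hullDiff hN hCN p₂)
  · rw [strongRep_of_not_isStrongMmodule hs₁, strongRep_of_not_isStrongMmodule hs₂] at h
    exact h₁.eq_of_hullDiff_eq h₂ h

end Representative

theorem stmt16_general [Fintype X] (D : Dissim X) :
    {C : Set X | ∃ p : X, IsCopointAt D p C}.ncard ≤ 2 * Fintype.card X - 1 := by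
  calc {C : Set X | ∃ p : X, IsCopointAt D p C}.ncard
      ≤ {A : Set X | IsStrongMmodule D A ∧ A.Nonempty}.ncard :=
        Set.ncard_le_ncard_of_injOn (strongRep D) (fun _ ⟨_, hC⟩ => hC.strongRep_mem)
          injOn_strongRep
    _ ≤ 2 * (Set.univ : Set X).ncard - 1 :=
        (isLaminar_setOf_isStrongMmodule.mono fun _ hA => hA.1).ncard_le
          (fun _ hA => hA.2) fun _ _ => Set.subset_univ _
    _ = 2 * Fintype.card X - 1 := by rw [Set.ncard_univ, Nat.card_eq_fintype_card]

/-- a dissimilarity space on n points has at most 2n - 1 distinct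
copoints. -/
theorem stmt16 [Fintype X] [Nonempty X] (D : Dissim X) :
    {C : Set X | ∃ p : X, IsCopointAt D p C}.ncard ≤ 2 * Fintype.card X - 1 :=
  stmt16_general D
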